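/- Let L > 0, ν ≥ 0, r ∈ ℝ³ with ‖r‖₂ = 1, and let k > 2νL². Let m : [0,∞) × [0,L] → ℝ³ be twice continuously differentiable in (t,x), satisfy ∂m/∂t = m × m_xx − ν m × (m × m_xx) + k(r − m) on [0,∞) × [0,L] with Neumann boundary conditions m_x(t,0) = m_x(t,L) = 0. Then ∫₀ᴸ ‖m(t,x) − r‖₂² dx → 0 as t → ∞, i.e. m(·,t) converges to the target equilibrium r in the L²-norm. (The attractivity assertion of the paper's Theorem 3.7: r is a globally asymptotically stable equilibrium of the controlled Landau–Lifshitz equation in the L²-norm; the paper states the threshold as k > 8νL⁴.) -/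

import Mathlib

/-!
Since the Landau–Lifshitz field `m × m_xx - ν m × (m × m_xx)` is orthogonal to `m`, each
`‖m(t, x)‖² - 1` is at most `(‖m(0, x)‖² - 1) e^{-kt}`, so `m` stays bounded, by `M` say. Integrating by parts
with the Neumann conditions, the exchange energy `E = ∫ ‖m_x‖²` satisfies `E' ≤ -2k E`, hence
`E(t) ≤ E(0) e^{-2kt}`. The Landau–Lifshitz field is an `x`-derivative up to the term
`ν m_x × (m × m_x)`, so `V = ∫ ‖m - r‖²` satisfies `V' ≤ -2k V + 2νM E`, and Grönwall gives
`V(t) ≤ (V(0) + 2νM E(0) t) e^{-2kt} → 0`.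
-/

open Filter

/-- Cross product on `ℝ³ = EuclideanSpace ℝ (Fin 3)`. -/
noncomputable def cross3 (u v : EuclideanSpace ℝ (Fin 3)) : EuclideanSpace ℝ (Fin 3) :=
  (WithLp.equiv 2 (Fin 3 → ℝ)).symm
    ![u 1 * v 2 - u 2 * v 1, u 2 * v 0 - u 0 * v 2, u 0 * v 1 - u 1 * v 0]

/-- Second spatial derivative `m_xx` of `m(t, x)`. -/
noncomputable def mxx (m : ℝ → ℝ → EuclideanSpace ℝ (Fin 3)) (t x : ℝ) :
    EuclideanSpace ℝ (Fin 3) :=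
  deriv (deriv (m t)) x

open Set Function Real
open scoped RealInnerProductSpace Topology

local notation "E3" => EuclideanSpace ℝ (Fin 3)

section CrossProduct

lemma cross3_apply (u v : E3) (i : Fin 3) :
    cross3 u v i = ![u 1 * v 2 - u 2 * v 1, u 2 * v 0 - u 0 * v 2, u 0 * v 1 - u 1 * v 0] i :=
  rfl

lemma real_inner_eq_fin_three (u v : E3) : ⟪u, v⟫ = u 0 * v 0 + u 1 * v 1 + u 2 * v 2 := by
  simp only [PiLp.inner_apply, RCLike.inner_apply, conj_trivial, Fin.sum_univ_three]
  ring

lemma isBilinearMap_cross3 : IsBilinearMap ℝ cross3 := by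
  refine ⟨?_, ?_, ?_, ?_⟩ <;> intros <;> ext i <;> fin_cases i <;>
    simp [cross3_apply] <;> ring

noncomputable def cross3L : E3 →L[ℝ] E3 →L[ℝ] E3 :=
  isBilinearMap_cross3.toContinuousBilinearMap

lemma cross3_self (a : E3) : cross3 a a = 0 := by
  ext i; fin_cases i <;> simp [cross3_apply] <;> ring

lemma cross3_zero_right (a : E3) : cross3 a 0 = 0 :=
  (cross3L a).map_zero

lemma inner_cross3_left (a b : E3) : ⟪cross3 a b, a⟫ = 0 := by
  simp [real_inner_eq_fin_three, cross3_apply]; ring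

lemma inner_cross3_right (a b : E3) : ⟪cross3 a b, b⟫ = 0 := by
  simp [real_inner_eq_fin_three, cross3_apply]; ring

lemma cross3_cross3 (a b c : E3) : cross3 a (cross3 b c) = ⟪a, c⟫ • b - ⟪a, b⟫ • c := by
  ext i; fin_cases i <;> simp [cross3_apply, real_inner_eq_fin_three] <;> ring

lemma norm_cross3_sq (a b : E3) :
    ‖cross3 a b‖ ^ 2 = ‖a‖ ^ 2 * ‖b‖ ^ 2 - ⟪a, b⟫ ^ 2 := by
  simp only [← real_inner_self_eq_norm_sq, real_inner_eq_fin_three, cross3_apply]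
  simp; ring

lemma norm_cross3_le (a b : E3) : ‖cross3 a b‖ ≤ ‖a‖ * ‖b‖ := by
  refine le_of_sq_le_sq ?_ (by positivity)
  rw [mul_pow, norm_cross3_sq]
  nlinarith [sq_nonneg ⟪a, b⟫]

lemma HasDerivAt.cross3 {u v : ℝ → E3} {u' v' : E3} {x : ℝ} (hu : HasDerivAt u u' x)
    (hv : HasDerivAt v v' x) :
    HasDerivAt (fun y => cross3 (u y) (v y)) (cross3 u' (v x) + cross3 (u x) v') x := by
  simpa [cross3L, add_comm] using
    (cross3L.hasDerivWithinAt_of_bilinear hu.hasDerivWithinAt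
      hv.hasDerivWithinAt (s := univ)).hasDerivAt univ_mem

lemma Continuous.cross3 {α : Type*} [TopologicalSpace α] {u v : α → E3} (hu : Continuous u)
    (hv : Continuous v) : Continuous fun y => cross3 (u y) (v y) :=
  cross3L.continuous₂.comp₂ hu hv

end CrossProduct

section PartialDerivatives

variable {F : Type*} [NormedAddCommGroup F] [NormedSpace ℝ F]

noncomputable def partialT (u : ℝ → ℝ → F) (t x : ℝ) : F := deriv (fun s => u s x) t

noncomputable def partialX (u : ℝ → ℝ → F) (t x : ℝ) : F := deriv (u t) x

variable {u : ℝ → ℝ → F}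

lemma hasDerivAt_partialT_fderiv (hu : Differentiable ℝ (uncurry u)) (t x : ℝ) :
    HasDerivAt (fun s => u s x) (fderiv ℝ (uncurry u) (t, x) (1, 0)) t :=
  (hu (t, x)).hasFDerivAt.comp_hasDerivAt (f := fun s => (s, x)) t
    ((hasDerivAt_id t).prodMk (hasDerivAt_const t x))

lemma hasDerivAt_partialX_fderiv (hu : Differentiable ℝ (uncurry u)) (t x : ℝ) :
    HasDerivAt (u t) (fderiv ℝ (uncurry u) (t, x) (0, 1)) x :=
  (hu (t, x)).hasFDerivAt.comp_hasDerivAt (f := fun y => (t, y)) x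
    ((hasDerivAt_const x t).prodMk (hasDerivAt_id x))

lemma hasDerivAt_partialT (hu : Differentiable ℝ (uncurry u)) (t x : ℝ) :
    HasDerivAt (fun s => u s x) (partialT u t x) t :=
  (hasDerivAt_partialT_fderiv hu t x).differentiableAt.hasDerivAt

lemma hasDerivAt_partialX (hu : Differentiable ℝ (uncurry u)) (t x : ℝ) :
    HasDerivAt (u t) (partialX u t x) x :=
  (hasDerivAt_partialX_fderiv hu t x).differentiableAt.hasDerivAt

lemma uncurry_partialT_eq_fderiv (hu : Differentiable ℝ (uncurry u)) :
    uncurry (partialT u) = fun p => fderiv ℝ (uncurry u) p (1, 0) :=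
  funext fun p => (hasDerivAt_partialT_fderiv hu p.1 p.2).deriv

lemma uncurry_partialX_eq_fderiv (hu : Differentiable ℝ (uncurry u)) :
    uncurry (partialX u) = fun p => fderiv ℝ (uncurry u) p (0, 1) :=
  funext fun p => (hasDerivAt_partialX_fderiv hu p.1 p.2).deriv

lemma ContDiff.uncurry_partialT {n k : WithTop ℕ∞} (hu : ContDiff ℝ n (uncurry u))
    (hkn : k + 1 ≤ n) : ContDiff ℝ k (uncurry (partialT u)) := by
  have hu₁ := (hu.of_le (le_add_self.trans hkn)).differentiable one_ne_zero
  rw [uncurry_partialT_eq_fderiv hu₁]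
  exact (hu.fderiv_right hkn).clm_apply contDiff_const

lemma ContDiff.uncurry_partialX {n k : WithTop ℕ∞} (hu : ContDiff ℝ n (uncurry u))
    (hkn : k + 1 ≤ n) : ContDiff ℝ k (uncurry (partialX u)) := by
  have hu₁ := (hu.of_le (le_add_self.trans hkn)).differentiable one_ne_zero
  rw [uncurry_partialX_eq_fderiv hu₁]
  exact (hu.fderiv_right hkn).clm_apply contDiff_const

lemma partialT_partialX (hu : ContDiff ℝ 2 (uncurry u)) :
    partialT (partialX u) = partialX (partialT u) := by
  have hd : Differentiable ℝ (fderiv ℝ (uncurry u)) :=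
    (hu.fderiv_right (m := 1) le_rfl).differentiable one_ne_zero
  have hu₁ : Differentiable ℝ (uncurry u) := hu.differentiable two_ne_zero
  have hsnd (v w : ℝ × ℝ) (p : ℝ × ℝ) :
      fderiv ℝ (fun q => fderiv ℝ (uncurry u) q v) p w
        = fderiv ℝ (fderiv ℝ (uncurry u)) p w v := by
    rw [fderiv_clm_apply (hd p) (differentiableAt_const v)]; simp
  ext t x
  calc partialT (partialX u) t x
      = fderiv ℝ (fun q => fderiv ℝ (uncurry u) q (0, 1)) (t, x) (1, 0) := by
        rw [← uncurry_partialX_eq_fderiv hu₁]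
        exact (hasDerivAt_partialT_fderiv
          ((hu.uncurry_partialX (k := 1) le_rfl).differentiable one_ne_zero) t x).deriv
    _ = fderiv ℝ (fderiv ℝ (uncurry u)) (t, x) (0, 1) (1, 0) := by
        rw [hsnd, hu.contDiffAt.isSymmSndFDerivAt (by simp)]
    _ = partialX (partialT u) t x := by
        rw [← hsnd, ← uncurry_partialT_eq_fderiv hu₁]
        exact ((hasDerivAt_partialX_fderiv
          ((hu.uncurry_partialT (k := 1) le_rfl).differentiable one_ne_zero) t x).deriv).symm

end PartialDerivatives

section IntervalIntegral

variable {E : Type*} [NormedAddCommGroup E] [NormedSpace ℝ E]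

theorem hasDerivAt_intervalIntegral_of_continuous {F F' : ℝ → ℝ → E}
    (hF : Continuous (uncurry F)) (hF' : Continuous (uncurry F'))
    (hd : ∀ t x, HasDerivAt (fun s => F s x) (F' t x) t) (a b t₀ : ℝ) :
    HasDerivAt (fun t => ∫ x in a..b, F t x) (∫ x in a..b, F' t₀ x) t₀ := by
  obtain ⟨C, hC⟩ :=
    ((isCompact_closedBall t₀ 1).prod isCompact_uIcc).exists_bound_of_continuousOn
      hF'.continuousOn
  refine (intervalIntegral.hasDerivAt_integral_of_dominated_loc_of_deriv_le
    (bound := fun _ => C) (Metric.ball_mem_nhds t₀ one_pos)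
    (Eventually.of_forall fun t => (hF.comp (Continuous.prodMk_right t)).aestronglyMeasurable)
    ((hF.comp (Continuous.prodMk_right t₀)).intervalIntegrable _ _)
    (hF'.comp (Continuous.prodMk_right t₀)).aestronglyMeasurable ?_ intervalIntegrable_const
    (Eventually.of_forall fun x _ t _ => hd t x)).2
  exact Eventually.of_forall fun x hx t ht =>
    hC (t, x) ⟨Metric.ball_subset_closedBall ht, uIoc_subset_uIcc hx⟩

theorem hasDerivAt_integral_norm_sq {F : Type*} [NormedAddCommGroup F] [InnerProductSpace ℝ F]
    {u u' : ℝ → ℝ → F} (hu : Continuous (uncurry u)) (hu' : Continuous (uncurry u'))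
    (hd : ∀ t x, HasDerivAt (fun s => u s x) (u' t x) t) (a b t : ℝ) :
    HasDerivAt (fun t => ∫ x in a..b, ‖u t x‖ ^ 2) (∫ x in a..b, 2 * ⟪u t x, u' t x⟫) t :=
  hasDerivAt_intervalIntegral_of_continuous (by fun_prop) (by fun_prop)
    (fun t x => (hd t x).norm_sq) a b t

end IntervalIntegral

section IntegrationByParts

variable {F : Type*} [NormedAddCommGroup F] [InnerProductSpace ℝ F]

theorem integral_inner_deriv_eq_neg {f g f' g' : ℝ → F} {a b : ℝ}
    (hf : ∀ x, HasDerivAt f (f' x) x) (hg : ∀ x, HasDerivAt g (g' x) x)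
    (hf' : Continuous f') (hg' : Continuous g') (ha : f a = 0) (hb : f b = 0) :
    ∫ x in a..b, ⟪f x, g' x⟫ = -∫ x in a..b, ⟪f' x, g x⟫ := by
  have hfc : Continuous f := continuous_iff_continuousAt.2 fun x => (hf x).continuousAt
  have hgc : Continuous g := continuous_iff_continuousAt.2 fun x => (hg x).continuousAt
  have hftc := intervalIntegral.integral_eq_sub_of_hasDerivAt (a := a) (b := b)
    (fun x _ => (hf x).inner ℝ (hg x))
    (((hfc.inner (𝕜 := ℝ) hg').add (hf'.inner (𝕜 := ℝ) hgc)).intervalIntegrable a b)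
  rw [intervalIntegral.integral_add ((hfc.inner hg').intervalIntegrable _ _)
    ((hf'.inner hgc).intervalIntegrable _ _), ha, hb, inner_zero_left, inner_zero_left] at hftc
  linarith

end IntegrationByParts

theorem le_add_mul_mul_exp_neg_of_hasDerivAt {f f' : ℝ → ℝ} {a c : ℝ}
    (hf : ∀ t, HasDerivAt f (f' t) t) (hf' : ∀ t, 0 < t → f' t ≤ -a * f t + c * exp (-a * t))
    {t : ℝ} (ht : 0 ≤ t) : f t ≤ (f 0 + c * t) * exp (-a * t) := by
  set g : ℝ → ℝ := fun s => f s * exp (a * s) - c * s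
  have hg (s : ℝ) : HasDerivAt g ((f' s + a * f s) * exp (a * s) - c) s := by
    refine (((hf s).mul ((hasDerivAt_id' s).const_mul a).exp).sub
      ((hasDerivAt_id' s).const_mul c)).congr_deriv ?_
    ring
  have hg_anti : AntitoneOn g (Ici 0) := by
    refine antitoneOn_of_hasDerivWithinAt_nonpos (convex_Ici 0)
      (continuous_iff_continuousAt.2 fun s => (hg s).continuousAt).continuousOn
      (fun s _ => (hg s).hasDerivWithinAt) fun s hs => ?_
    rw [interior_Ici] at hs
    have hexp : exp (-a * s) * exp (a * s) = 1 := by rw [← exp_add]; simp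
    have h := mul_le_mul_of_nonneg_right (hf' s hs) (exp_pos (a * s)).le
    rw [add_mul, mul_assoc c, hexp] at h
    linarith
  have hgt : f t * exp (a * t) ≤ f 0 + c * t := by
    simpa [g] using hg_anti self_mem_Ici ht ht
  calc f t = f t * exp (a * t) * exp (-a * t) := by
        rw [mul_assoc, ← exp_add]; simp
    _ ≤ (f 0 + c * t) * exp (-a * t) := by gcongr

theorem tendsto_add_mul_mul_exp_neg_atTop {a : ℝ} (ha : 0 < a) (b c : ℝ) :
    Tendsto (fun t => (b + c * t) * exp (-a * t)) atTop (𝓝 0) := by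
  have hlin : Tendsto (fun t => a * t) atTop atTop := tendsto_id.const_mul_atTop ha
  have h0 := (tendsto_pow_mul_exp_neg_atTop_nhds_zero 0).comp hlin
  have h1 := (tendsto_pow_mul_exp_neg_atTop_nhds_zero 1).comp hlin
  convert (h0.const_mul b).add (h1.const_mul (c / a)) using 2 with t
  · simp only [comp_apply, pow_zero, pow_one]; rw [neg_mul]; field_simp
  · simp

/-- The Landau–Lifshitz field at `m = a`, `m_xx = q`. -/
noncomputable def llField (ν : ℝ) (a q : E3) : E3 := cross3 a q - ν • cross3 a (cross3 a q)

lemma inner_llField_left (ν : ℝ) (a q : E3) : ⟪llField ν a q, a⟫ = 0 := by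
  simp [llField, inner_sub_left, real_inner_smul_left, inner_cross3_left]

lemma inner_llField_right (ν : ℝ) (a q : E3) : ⟪llField ν a q, q⟫ = ν * ‖cross3 a q‖ ^ 2 := by
  rw [norm_cross3_sq, llField, inner_sub_left, real_inner_smul_left, cross3_cross3,
    inner_cross3_right, inner_sub_left, real_inner_smul_left,
    real_inner_smul_left, real_inner_self_eq_norm_sq, real_inner_self_eq_norm_sq]
  ring

section Curves

variable {γ : ℝ → E3}

/-- `llField ν γ γ''` is the derivative of the flux `γ × γ' - ν γ × (γ × γ')` up to the term
`ν γ' × (γ × γ')`, so under Neumann conditions it integrates to that term. -/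
theorem integral_inner_llField (hγ : ContDiff ℝ 2 γ) {a b : ℝ} (ha : deriv γ a = 0)
    (hb : deriv γ b = 0) (ν : ℝ) (c : E3) :
    ∫ x in a..b, ⟪llField ν (γ x) (deriv (deriv γ) x), c⟫
      = ν * ∫ x in a..b, ⟪cross3 (deriv γ x) (cross3 (γ x) (deriv γ x)), c⟫ := by
  have hγ' : ContDiff ℝ 1 (deriv γ) := hγ.deriv' (n := 1)
  have h1 (x : ℝ) : HasDerivAt γ (deriv γ x) x := (hγ.differentiable two_ne_zero x).hasDerivAt
  have h2 (x : ℝ) : HasDerivAt (deriv γ) (deriv (deriv γ) x) x :=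
    (hγ'.differentiable one_ne_zero x).hasDerivAt
  set Φ : ℝ → E3 := fun x =>
    cross3 (γ x) (deriv γ x) - ν • cross3 (γ x) (cross3 (γ x) (deriv γ x))
  set A : ℝ → E3 := fun x => cross3 (deriv γ x) (cross3 (γ x) (deriv γ x))
  have hΦ (x : ℝ) : HasDerivAt Φ (llField ν (γ x) (deriv (deriv γ) x) - ν • A x) x := by
    refine (((h1 x).cross3 (h2 x)).sub (((h1 x).cross3 ((h1 x).cross3 (h2 x))).const_smul ν))
      |>.congr_deriv ?_
    simp only [llField, A, cross3_self, zero_add, smul_add]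
    abel
  have hΦc (x : ℝ) : HasDerivAt (fun y => ⟪Φ y, c⟫)
      (⟪llField ν (γ x) (deriv (deriv γ) x), c⟫ - ν * ⟪A x, c⟫) x := by
    simpa [inner_sub_left, real_inner_smul_left] using (hΦ x).inner ℝ (hasDerivAt_const x c)
  have hγc : Continuous γ := hγ.continuous
  have hγ'c : Continuous (deriv γ) := hγ'.continuous
  have hγ''c : Continuous (deriv (deriv γ)) := hγ'.continuous_deriv le_rfl
  have hfield : Continuous fun x => ⟪llField ν (γ x) (deriv (deriv γ) x), c⟫ :=
    ((hγc.cross3 hγ''c).sub ((hγc.cross3 (hγc.cross3 hγ''c)).const_smul ν)).inner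
      continuous_const
  have hA : Continuous fun x => ν * ⟪A x, c⟫ :=
    continuous_const.mul ((hγ'c.cross3 (hγc.cross3 hγ'c)).inner continuous_const)
  have hftc := intervalIntegral.integral_eq_sub_of_hasDerivAt (fun x _ => hΦc x)
    ((hfield.sub hA).intervalIntegrable a b)
  rw [intervalIntegral.integral_sub (hfield.intervalIntegrable a b)
    (hA.intervalIntegrable a b), intervalIntegral.integral_const_mul] at hftc
  simp only [Φ, ha, hb, cross3_zero_right, smul_zero, sub_zero, inner_zero_left] at hftc
  linarith

end Curves

structure IsControlledLLSolution (L ν k : ℝ) (r : E3) (m : ℝ → ℝ → E3) : Prop where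
  contDiff : ContDiff ℝ 2 (uncurry m)
  pde : ∀ t x, 0 ≤ t → x ∈ Icc 0 L →
    partialT m t x = llField ν (m t x) (partialX (partialX m) t x) + k • (r - m t x)
  neumann : ∀ t, 0 ≤ t → partialX m t 0 = 0 ∧ partialX m t L = 0

noncomputable def exchangeEnergy (L : ℝ) (m : ℝ → ℝ → E3) (t : ℝ) : ℝ :=
  ∫ x in (0 : ℝ)..L, ‖partialX m t x‖ ^ 2

namespace IsControlledLLSolution

variable {L ν k : ℝ} {r : E3} {m : ℝ → ℝ → E3}

lemma differentiable (hm : IsControlledLLSolution L ν k r m) : Differentiable ℝ (uncurry m) :=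
  hm.contDiff.differentiable two_ne_zero

lemma contDiff_partialT (hm : IsControlledLLSolution L ν k r m) :
    ContDiff ℝ 1 (uncurry (partialT m)) :=
  hm.contDiff.uncurry_partialT le_rfl

lemma contDiff_partialX (hm : IsControlledLLSolution L ν k r m) :
    ContDiff ℝ 1 (uncurry (partialX m)) :=
  hm.contDiff.uncurry_partialX le_rfl

lemma contDiff_slice (hm : IsControlledLLSolution L ν k r m) (t : ℝ) : ContDiff ℝ 2 (m t) :=
  hm.contDiff.comp (contDiff_const.prodMk contDiff_id)

/-- As `llField` is orthogonal to `m`, `(‖m‖² - 1)' ≤ -k (‖m‖² - 1)` along each fibre. -/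
lemma norm_sq_sub_one_le (hm : IsControlledLLSolution L ν k r m) (hr : ‖r‖ = 1) (hk : 0 ≤ k)
    {t x : ℝ} (ht : 0 ≤ t) (hx : x ∈ Icc 0 L) :
    ‖m t x‖ ^ 2 - 1 ≤ (‖m 0 x‖ ^ 2 - 1) * exp (-k * t) := by
  have hd (s : ℝ) : HasDerivAt (fun s => ‖m s x‖ ^ 2 - 1) (2 * ⟪m s x, partialT m s x⟫) s :=
    (hasDerivAt_partialT hm.differentiable s x).norm_sq.sub_const 1
  refine (le_add_mul_mul_exp_neg_of_hasDerivAt (a := k) (c := 0) hd (fun s hs => ?_) ht).trans_eq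
    (by simp)
  have hinner : ⟪m s x, partialT m s x⟫ = k * (⟪m s x, r⟫ - ‖m s x‖ ^ 2) := by
    rw [hm.pde s x hs.le hx, inner_add_right, real_inner_comm, inner_llField_left,
      real_inner_smul_right, inner_sub_right, real_inner_self_eq_norm_sq, zero_add]
  have hmr : ⟪m s x, r⟫ ≤ ‖m s x‖ := by simpa [hr] using real_inner_le_norm (m s x) r
  rw [hinner]
  nlinarith [sq_nonneg (‖m s x‖ - 1)]

lemma exists_norm_le (hm : IsControlledLLSolution L ν k r m) (hr : ‖r‖ = 1) (hk : 0 ≤ k) :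
    ∃ M, 0 ≤ M ∧ ∀ t, 0 ≤ t → ∀ x ∈ Icc 0 L, ‖m t x‖ ≤ M := by
  obtain ⟨C, hC⟩ := isCompact_Icc.exists_bound_of_continuousOn
    (hm.contDiff.continuous.uncurry_left 0).continuousOn (s := Icc 0 L)
  refine ⟨1 + |C|, by positivity, fun t ht x hx => ?_⟩
  have h := hm.norm_sq_sub_one_le hr hk ht hx
  have he : exp (-k * t) ≤ 1 := exp_le_one_iff.2 (by nlinarith)
  have h0 : ‖m 0 x‖ ≤ |C| := by simpa using (hC x hx).trans (le_abs_self C)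
  have h0' : ‖m 0 x‖ ^ 2 * exp (-k * t) ≤ |C| ^ 2 := by
    nlinarith [exp_pos (-k * t), norm_nonneg (m 0 x)]
  refine (pow_le_pow_iff_left₀ (norm_nonneg _) (by positivity) two_ne_zero).1 ?_
  nlinarith [exp_pos (-k * t), abs_nonneg C]

lemma hasDerivAt_exchangeEnergy (hm : IsControlledLLSolution L ν k r m) (t : ℝ) :
    HasDerivAt (exchangeEnergy L m)
      (∫ x in (0 : ℝ)..L, 2 * ⟪partialX m t x, partialT (partialX m) t x⟫) t :=
  hasDerivAt_integral_norm_sq hm.contDiff_partialX.continuous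
    (hm.contDiff_partialX.uncurry_partialT (k := 0) le_rfl).continuous
    (hasDerivAt_partialT (hm.contDiff_partialX.differentiable one_ne_zero)) 0 L t

lemma hasDerivAt_integral_norm_sub_sq (hm : IsControlledLLSolution L ν k r m) (t : ℝ) :
    HasDerivAt (fun t => ∫ x in (0 : ℝ)..L, ‖m t x - r‖ ^ 2)
      (∫ x in (0 : ℝ)..L, 2 * ⟪m t x - r, partialT m t x⟫) t :=
  hasDerivAt_integral_norm_sq (u := fun t x => m t x - r)
    (by exact hm.contDiff.continuous.sub continuous_const)
    hm.contDiff_partialT.continuous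
    (fun t x => (hasDerivAt_partialT hm.differentiable t x).sub_const r) 0 L t

/-- Integrating by parts twice, the exchange energy is dissipated at rate at least `2k`; the
uncontrolled part contributes `-2ν ∫ ‖m × m_xx‖² ≤ 0`. -/
lemma integral_inner_partialT_partialX_le (hm : IsControlledLLSolution L ν k r m) (hν : 0 ≤ ν)
    (hL : 0 ≤ L) {t : ℝ} (ht : 0 ≤ t) :
    ∫ x in (0 : ℝ)..L, 2 * ⟪partialX m t x, partialT (partialX m) t x⟫
      ≤ -(2 * k) * exchangeEnergy L m t := by
  have hm₀ := hm.contDiff.continuous.uncurry_left t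
  have hmt := hm.contDiff_partialT.continuous.uncurry_left t
  have hmx := hm.contDiff_partialX.continuous.uncurry_left t
  have hmxx := (hm.contDiff_partialX.uncurry_partialX (k := 0) le_rfl).continuous.uncurry_left t
  have hmtx := (hm.contDiff_partialT.uncurry_partialX (k := 0) le_rfl).continuous.uncurry_left t
  have hmx_deriv := hasDerivAt_partialX (hm.contDiff_partialX.differentiable one_ne_zero) t
  obtain ⟨h0, hL0⟩ := hm.neumann t ht
  have hparts : ∫ x in (0 : ℝ)..L, ⟪partialX m t x, partialX (partialT m) t x⟫
      = -∫ x in (0 : ℝ)..L, ⟪partialX (partialX m) t x, partialT m t x⟫ :=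
    integral_inner_deriv_eq_neg hmx_deriv
      (hasDerivAt_partialX (hm.contDiff_partialT.differentiable one_ne_zero) t) hmxx hmtx h0 hL0
  have henergy :
      ∫ x in (0 : ℝ)..L, ⟪partialX (partialX m) t x, r - m t x⟫ = exchangeEnergy L m t := by
    have := integral_inner_deriv_eq_neg (g := fun x => r - m t x) hmx_deriv
      (fun x => (hasDerivAt_partialX hm.differentiable t x).const_sub r) hmxx hmx.neg h0 hL0
    simp only [inner_neg_right, real_inner_self_eq_norm_sq, intervalIntegral.integral_neg] at this
    rw [exchangeEnergy, ← neg_eq_iff_eq_neg.2 this, neg_neg]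
  have hmono : k * exchangeEnergy L m t
      ≤ ∫ x in (0 : ℝ)..L, ⟪partialX (partialX m) t x, partialT m t x⟫ := by
    rw [← henergy, ← intervalIntegral.integral_const_mul]
    refine intervalIntegral.integral_mono_on hL
      ((continuous_const.mul (hmxx.inner (continuous_const.sub hm₀))).intervalIntegrable _ _)
      ((hmxx.inner hmt).intervalIntegrable _ _) fun x hx => ?_
    rw [hm.pde t x ht hx, inner_add_right, real_inner_comm (llField _ _ _), inner_llField_right,
      real_inner_smul_right]
    nlinarith [sq_nonneg ‖cross3 (m t x) (partialX (partialX m) t x)‖]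
  rw [partialT_partialX hm.contDiff, intervalIntegral.integral_const_mul, hparts]
  linarith

/-- The control contracts `∫ ‖m - r‖²` at rate `2k`; by `integral_inner_llField` the
Landau–Lifshitz field only feeds it through `ν ∫ ⟪m_x × (m × m_x), r⟫`, which the exchange
energy controls. -/
lemma integral_inner_sub_partialT_le (hm : IsControlledLLSolution L ν k r m) (hr : ‖r‖ = 1)
    (hν : 0 ≤ ν) (hL : 0 ≤ L) {t M : ℝ} (ht : 0 ≤ t) (hM : ∀ x ∈ Icc 0 L, ‖m t x‖ ≤ M) :
    ∫ x in (0 : ℝ)..L, 2 * ⟪m t x - r, partialT m t x⟫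
      ≤ -(2 * k) * (∫ x in (0 : ℝ)..L, ‖m t x - r‖ ^ 2) + 2 * ν * M * exchangeEnergy L m t := by
  have hm₀ := hm.contDiff.continuous.uncurry_left t
  have hmx := hm.contDiff_partialX.continuous.uncurry_left t
  have hmxx := (hm.contDiff_partialX.uncurry_partialX (k := 0) le_rfl).continuous.uncurry_left t
  obtain ⟨h0, hL0⟩ := hm.neumann t ht
  set A : ℝ → E3 := fun x => cross3 (partialX m t x) (cross3 (m t x) (partialX m t x))
  have hflux : ∫ x in (0 : ℝ)..L, ⟪llField ν (m t x) (partialX (partialX m) t x), r⟫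
      = ν * ∫ x in (0 : ℝ)..L, ⟪A x, r⟫ :=
    integral_inner_llField (hm.contDiff_slice t) h0 hL0 ν r
  have hpt : EqOn (fun x => 2 * ⟪m t x - r, partialT m t x⟫)
      (fun x => -(2 * k) * ‖m t x - r‖ ^ 2
        - 2 * ⟪llField ν (m t x) (partialX (partialX m) t x), r⟫) (uIcc 0 L) := by
    intro x hx
    rw [uIcc_of_le hL] at hx
    dsimp only
    rw [hm.pde t x ht hx, inner_add_right, real_inner_smul_right, ← neg_sub (m t x) r,
      inner_neg_right, real_inner_self_eq_norm_sq, inner_sub_left, real_inner_comm _ (m t x),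
      inner_llField_left, real_inner_comm _ r]
    ring
  have hA : -∫ x in (0 : ℝ)..L, ⟪A x, r⟫ ≤ M * exchangeEnergy L m t := by
    rw [exchangeEnergy, ← intervalIntegral.integral_neg, ← intervalIntegral.integral_const_mul]
    refine intervalIntegral.integral_mono_on hL
      ((((hmx.cross3 (hm₀.cross3 hmx)).inner continuous_const).neg).intervalIntegrable _ _)
      ((continuous_const.mul (hmx.norm.pow 2)).intervalIntegrable _ _) fun x hx => ?_
    calc -⟪A x, r⟫ ≤ ‖A x‖ * ‖r‖ := (neg_le_abs _).trans (abs_real_inner_le_norm _ _)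
      _ ≤ ‖partialX m t x‖ * (‖m t x‖ * ‖partialX m t x‖) := by
        rw [hr, mul_one]
        exact (norm_cross3_le _ _).trans (by gcongr; exact norm_cross3_le _ _)
      _ ≤ M * ‖partialX m t x‖ ^ 2 := by nlinarith [hM x hx, norm_nonneg (partialX m t x)]
  rw [intervalIntegral.integral_congr hpt, intervalIntegral.integral_sub,
    intervalIntegral.integral_const_mul, intervalIntegral.integral_const_mul, hflux]
  · nlinarith [mul_le_mul_of_nonneg_left hA hν]
  · exact (continuous_const.mul ((hm₀.sub continuous_const).norm.pow 2)).intervalIntegrable _ _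
  · exact (continuous_const.mul (((hm₀.cross3 hmxx).sub
      ((hm₀.cross3 (hm₀.cross3 hmxx)).const_smul ν)).inner continuous_const)).intervalIntegrable _ _

lemma exchangeEnergy_le (hm : IsControlledLLSolution L ν k r m) (hν : 0 ≤ ν) (hL : 0 ≤ L)
    {t : ℝ} (ht : 0 ≤ t) :
    exchangeEnergy L m t ≤ exchangeEnergy L m 0 * exp (-(2 * k) * t) :=
  (le_add_mul_mul_exp_neg_of_hasDerivAt (a := 2 * k) (c := 0) hm.hasDerivAt_exchangeEnergy
    (fun s hs => (hm.integral_inner_partialT_partialX_le hν hL hs.le).trans_eq (by ring))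
    ht).trans_eq (by ring)

lemma exists_integral_norm_sub_sq_le (hm : IsControlledLLSolution L ν k r m) (hr : ‖r‖ = 1)
    (hν : 0 ≤ ν) (hL : 0 ≤ L) (hk : 0 ≤ k) :
    ∃ C, ∀ t, 0 ≤ t → ∫ x in (0 : ℝ)..L, ‖m t x - r‖ ^ 2
      ≤ ((∫ x in (0 : ℝ)..L, ‖m 0 x - r‖ ^ 2) + C * t) * exp (-(2 * k) * t) := by
  obtain ⟨M, hM0, hM⟩ := hm.exists_norm_le hr hk
  refine ⟨2 * ν * M * exchangeEnergy L m 0, fun t ht =>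
    le_add_mul_mul_exp_neg_of_hasDerivAt hm.hasDerivAt_integral_norm_sub_sq (fun s hs => ?_) ht⟩
  calc _ ≤ _ := hm.integral_inner_sub_partialT_le hr hν hL hs.le (hM s hs.le)
    _ ≤ -(2 * k) * (∫ x in (0 : ℝ)..L, ‖m s x - r‖ ^ 2)
          + 2 * ν * M * (exchangeEnergy L m 0 * exp (-(2 * k) * s)) := by
      gcongr
      exact hm.exchangeEnergy_le hν hL hs.le
    _ = _ := by ring

end IsControlledLLSolution

/-- attractivity in Theorem 3.7: For `k > 2νL²`, along C² solutions of
the controlled Landau–Lifshitz equation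
`∂m/∂t = m × m_xx − ν m × (m × m_xx) + k(r − m)` with Neumann boundary conditions on
`[0, L]` and `‖r‖ = 1`, the solution converges to `r` in the L²-norm:
`∫₀ᴸ ‖m(t,x) − r‖² dx → 0` as `t → ∞`. -/
theorem controlled_landau_lifshitz_L2_attractivity
    (L ν k : ℝ) (hL : 0 < L) (hν : 0 ≤ ν)
    (r : EuclideanSpace ℝ (Fin 3)) (hr : ‖r‖ = 1)
    (hk : 2 * ν * L ^ 2 < k)
    (m : ℝ → ℝ → EuclideanSpace ℝ (Fin 3))
    (hsmooth : ContDiff ℝ 2 (fun p : ℝ × ℝ => m p.1 p.2))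
    (hpde : ∀ t x : ℝ, 0 ≤ t → x ∈ Set.Icc (0 : ℝ) L →
      deriv (fun s => m s x) t
        = cross3 (m t x) (mxx m t x)
          - ν • cross3 (m t x) (cross3 (m t x) (mxx m t x))
          + k • (r - m t x))
    (hbc : ∀ t : ℝ, 0 ≤ t → deriv (m t) 0 = 0 ∧ deriv (m t) L = 0) :
    Tendsto (fun t : ℝ => ∫ x in (0 : ℝ)..L, ‖m t x - r‖ ^ 2) atTop (nhds 0) := by
  have hm : IsControlledLLSolution L ν k r m := ⟨hsmooth, hpde, hbc⟩
  have hk₀ : 0 < k := lt_of_le_of_lt (by positivity) hk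
  obtain ⟨C, hC⟩ := hm.exists_integral_norm_sub_sq_le hr hν hL.le hk₀.le
  refine squeeze_zero' (Eventually.of_forall fun t => ?_) ((eventually_ge_atTop 0).mono hC)
    (tendsto_add_mul_mul_exp_neg_atTop (by positivity) _ C)
  exact intervalIntegral.integral_nonneg hL.le fun x _ => by positivity
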